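/- arXiv:2009.09176 — 6 statements merged into one kernel-verified Lean document; each statement's English description precedes it below -/
import Mathlib

section
/- In the case-(i) model, if Var(ε₁) > 0, then the ratio t = cov(x_i, x_k)/cov(x_j, x_k) equals γ·β·Var(ε₁)/(β²·θ·Var(ε₁) + θ·Var(ε₂)), and t ≠ 0. -/
open MeasureTheory ProbabilityTheory
open scoped NNReal

/-- Covariance of two real-valued random variables. -/
noncomputable def cov {Ω : Type*} [MeasurableSpace Ω] (μ : Measure Ω) (X Y : Ω → ℝ) : ℝ :=
  ∫ ω, (X ω - μ[X]) * (Y ω - μ[Y]) ∂μ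

/-- Variance of a real-valued random variable. -/
noncomputable def Var {Ω : Type*} [MeasurableSpace Ω] (μ : Measure Ω) (X : Ω → ℝ) : ℝ :=
  cov μ X X

/-! Covariance is bilinear and independence kills the cross terms, so the covariance of two
linear combinations of the independent sources is `∑ aᵢ bᵢ Var(sourceᵢ)`. Both `cov(x_i, x_k)` and
`cov(x_j, x_k)` carry the factor `η` of `x_k`, which cancels; the remaining denominator is
`θ (β² Var ε₁ + Var ε₂)`, nonzero because `Var ε₁ > 0`. -/

namespace ProbabilityTheory

variable {Ω ι : Type*} [MeasurableSpace Ω] {μ : Measure Ω} [Fintype ι] {X : ι → Ω → ℝ}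

lemma covariance_self_nonneg (Y : Ω → ℝ) : 0 ≤ cov[Y, Y; μ] :=
  integral_nonneg fun _ ↦ mul_self_nonneg _

lemma covariance_fun_sum_mul_fun_sum_mul_of_pairwise [IsFiniteMeasure μ]
    (hX : ∀ i, MemLp (X i) 2 μ) (hcov : Pairwise fun i j ↦ cov[X i, X j; μ] = 0)
    (a b : ι → ℝ) :
    cov[fun ω ↦ ∑ i, a i * X i ω, fun ω ↦ ∑ j, b j * X j ω; μ]
      = ∑ i, a i * b i * cov[X i, X i; μ] := by
  rw [covariance_fun_sum_fun_sum (fun i ↦ (hX i).const_mul (a i))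
    (fun j ↦ (hX j).const_mul (b j))]
  refine Finset.sum_congr rfl fun i _ ↦ ?_
  rw [Finset.sum_eq_single i]
  · rw [covariance_const_mul_left, covariance_const_mul_right]; ring
  · intro j _ hji
    rw [covariance_const_mul_left, covariance_const_mul_right, hcov hji.symm, mul_zero, mul_zero]
  · simp

lemma covariance_fun_sum_mul_fun_sum_mul_of_iIndepFun [IsFiniteMeasure μ]
    (hX : ∀ i, MemLp (X i) 2 μ) (hindep : iIndepFun X μ) (a b : ι → ℝ) :
    cov[fun ω ↦ ∑ i, a i * X i ω, fun ω ↦ ∑ j, b j * X j ω; μ]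
      = ∑ i, a i * b i * cov[X i, X i; μ] :=
  covariance_fun_sum_mul_fun_sum_mul_of_pairwise hX
    (fun _ _ hij ↦ (hindep.indepFun hij).covariance_eq_zero (hX _) (hX _)) a b

end ProbabilityTheory

theorem caseI_ratio_general {Ω : Type*} [MeasurableSpace Ω] (μ : Measure Ω) [IsProbabilityMeasure μ]
    (ε₁ ε₂ ei ej ek : Ω → ℝ)
    (hL₁ : MemLp ε₁ 2 μ) (hL₂ : MemLp ε₂ 2 μ)
    (hLi : MemLp ei 2 μ) (hLj : MemLp ej 2 μ) (hLk : MemLp ek 2 μ)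
    (hindep : iIndepFun ![ε₁, ε₂, ei, ej, ek] μ)
    (β γ θ η : ℝ) (hβ : β ≠ 0) (hγ : γ ≠ 0) (hθ : θ ≠ 0) (hη : η ≠ 0)
    (xi xj xk : Ω → ℝ)
    (hxi : xi = fun ω => γ * ε₁ ω + ei ω)
    (hxj : xj = fun ω => β * θ * ε₁ ω + θ * ε₂ ω + ej ω)
    (hxk : xk = fun ω => β * η * ε₁ ω + η * ε₂ ω + ek ω)
    (hV₁ : 0 < Var μ ε₁) :
    cov μ xi xk / cov μ xj xk
        = γ * β * Var μ ε₁ / (β ^ 2 * θ * Var μ ε₁ + θ * Var μ ε₂) ∧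
      cov μ xi xk / cov μ xj xk ≠ 0 := by
  have hX : ∀ i, MemLp (![ε₁, ε₂, ei, ej, ek] i) 2 μ := by
    intro i; fin_cases i <;> assumption
  have cov_lin_comb (a b : Fin 5 → ℝ) (Y Z : Ω → ℝ)
      (hY : Y = fun ω ↦ ∑ i, a i * ![ε₁, ε₂, ei, ej, ek] i ω)
      (hZ : Z = fun ω ↦ ∑ i, b i * ![ε₁, ε₂, ei, ej, ek] i ω) :
      cov μ Y Z = ∑ i, a i * b i * Var μ (![ε₁, ε₂, ei, ej, ek] i) := by
    rw [hY, hZ]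
    exact covariance_fun_sum_mul_fun_sum_mul_of_iIndepFun hX hindep a b
  have hik : cov μ xi xk = η * (γ * β * Var μ ε₁) := by
    rw [cov_lin_comb ![γ, 0, 1, 0, 0] ![β * η, η, 0, 0, 1] xi xk
      (by simp [hxi, Fin.sum_univ_five]) (by simp [hxk, Fin.sum_univ_five])]
    simp only [Fin.sum_univ_five, Matrix.cons_val_zero, Matrix.cons_val_one, Matrix.cons_val]
    ring
  have hjk : cov μ xj xk = η * (β ^ 2 * θ * Var μ ε₁ + θ * Var μ ε₂) := by
    rw [cov_lin_comb ![β * θ, θ, 0, 1, 0] ![β * η, η, 0, 0, 1] xj xk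
      (by simp [hxj, Fin.sum_univ_five]) (by simp [hxk, Fin.sum_univ_five])]
    simp only [Fin.sum_univ_five, Matrix.cons_val_zero, Matrix.cons_val_one, Matrix.cons_val]
    ring
  have hden : β ^ 2 * θ * Var μ ε₁ + θ * Var μ ε₂ ≠ 0 := by
    have : 0 ≤ Var μ ε₂ := covariance_self_nonneg ε₂
    rw [show β ^ 2 * θ * Var μ ε₁ + θ * Var μ ε₂ = θ * (β ^ 2 * Var μ ε₁ + Var μ ε₂) by ring]
    exact mul_ne_zero hθ (by positivity)
  have hratio : cov μ xi xk / cov μ xj xk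
      = γ * β * Var μ ε₁ / (β ^ 2 * θ * Var μ ε₁ + θ * Var μ ε₂) := by
    rw [hik, hjk, mul_div_mul_left _ _ hη]
  exact ⟨hratio, hratio ▸ div_ne_zero (by positivity) hden⟩

/-- In the case-(i) model with `Var(ε₁) > 0`, the ratio `t = cov(x_i,x_k)/cov(x_j,x_k)`
equals `γβ·Var(ε₁)/(β²θ·Var(ε₁) + θ·Var(ε₂))` and is nonzero. -/
theorem caseI_ratio {Ω : Type*} [MeasurableSpace Ω] (μ : Measure Ω) [IsProbabilityMeasure μ]
    (ε₁ ε₂ ei ej ek : Ω → ℝ)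
    (hm₁ : Measurable ε₁) (hm₂ : Measurable ε₂)
    (hmi : Measurable ei) (hmj : Measurable ej) (hmk : Measurable ek)
    (hL₁ : MemLp ε₁ 2 μ) (hL₂ : MemLp ε₂ 2 μ)
    (hLi : MemLp ei 2 μ) (hLj : MemLp ej 2 μ) (hLk : MemLp ek 2 μ)
    (hz₁ : μ[ε₁] = 0) (hz₂ : μ[ε₂] = 0)
    (hzi : μ[ei] = 0) (hzj : μ[ej] = 0) (hzk : μ[ek] = 0)
    (hindep : iIndepFun ![ε₁, ε₂, ei, ej, ek] μ)
    (β γ θ η : ℝ) (hβ : β ≠ 0) (hγ : γ ≠ 0) (hθ : θ ≠ 0) (hη : η ≠ 0)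
    (xi xj xk : Ω → ℝ)
    (hxi : xi = fun ω => γ * ε₁ ω + ei ω)
    (hxj : xj = fun ω => β * θ * ε₁ ω + θ * ε₂ ω + ej ω)
    (hxk : xk = fun ω => β * η * ε₁ ω + η * ε₂ ω + ek ω)
    (hV₁ : 0 < Var μ ε₁) :
    cov μ xi xk / cov μ xj xk
        = γ * β * Var μ ε₁ / (β ^ 2 * θ * Var μ ε₁ + θ * Var μ ε₂) ∧
      cov μ xi xk / cov μ xj xk ≠ 0 :=
  caseI_ratio_general μ ε₁ ε₂ ei ej ek hL₁ hL₂ hLi hLj hLk hindep β γ θ η hβ hγ hθ hη xi xj xk hxi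
    hxj hxk hV₁
end

section
/- In the case-(ii) model, cov(x_i, x_k) = β·γ·η·Var(ε₂) and cov(x_j, x_k) = θ·η·Var(ε₂); in particular, if Var(ε₂) > 0 then cov(x_i, x_k)/cov(x_j, x_k) = β·γ/θ. -/
open MeasureTheory ProbabilityTheory
open scoped NNReal

/-!
Covariance is bilinear and vanishes on independent square-integrable pairs. Each observed
variable is a multiple of the common factor `ε₂` plus a noise term (for `x_i` the noise is
`γ ε₁ + e_i`) uncorrelated with `ε₂` and with the other noise, so in the covariance of two of
them only the factor term survives: it is the product of the two loadings times `Var ε₂`.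
The ratio then follows by cancelling `η Var ε₂ ≠ 0`.
-/

section Covariance

variable {Ω : Type*} {mΩ : MeasurableSpace Ω} {μ : Measure Ω} [IsFiniteMeasure μ]
  {X Y Z : Ω → ℝ}

lemma covariance_const_mul_add_left (hX : MemLp X 2 μ) (hY : MemLp Y 2 μ) (hZ : MemLp Z 2 μ)
    (c : ℝ) : cov[fun ω ↦ c * X ω + Y ω, Z; μ] = c * cov[X, Z; μ] + cov[Y, Z; μ] := by
  change cov[(fun ω ↦ c * X ω) + Y, Z; μ] = _
  rw [covariance_add_left (hX.const_mul c) hY hZ, covariance_const_mul_left]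

lemma covariance_const_mul_add_right (hX : MemLp X 2 μ) (hY : MemLp Y 2 μ) (hZ : MemLp Z 2 μ)
    (c : ℝ) : cov[X, fun ω ↦ c * Y ω + Z ω; μ] = c * cov[X, Y; μ] + cov[X, Z; μ] := by
  rw [covariance_comm, covariance_const_mul_add_left hY hZ hX, covariance_comm X,
    covariance_comm X]

lemma covariance_one_factor {S N₁ N₂ : Ω → ℝ}
    (hS : MemLp S 2 μ) (hN₁ : MemLp N₁ 2 μ) (hN₂ : MemLp N₂ 2 μ)
    (h₁ : cov[N₁, S; μ] = 0) (h₂ : cov[S, N₂; μ] = 0) (h₁₂ : cov[N₁, N₂; μ] = 0) (a b : ℝ) :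
    cov[fun ω ↦ a * S ω + N₁ ω, fun ω ↦ b * S ω + N₂ ω; μ] = a * b * cov[S, S; μ] := by
  have hT : MemLp (fun ω ↦ b * S ω + N₂ ω) 2 μ := (hS.const_mul b).add hN₂
  rw [covariance_const_mul_add_left hS hN₁ hT,
    covariance_const_mul_add_right hS hS hN₂, covariance_const_mul_add_right hN₁ hS hN₂,
    h₁, h₂, h₁₂]
  ring

end Covariance

theorem caseII_cov_general {Ω : Type*} [MeasurableSpace Ω] (μ : Measure Ω) [IsProbabilityMeasure μ]
    (ε₁ ε₂ ei ej ek : Ω → ℝ)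
    (hL₁ : MemLp ε₁ 2 μ) (hL₂ : MemLp ε₂ 2 μ)
    (hLi : MemLp ei 2 μ) (hLj : MemLp ej 2 μ) (hLk : MemLp ek 2 μ)
    (hindep : iIndepFun ![ε₁, ε₂, ei, ej, ek] μ)
    (β γ θ η : ℝ) (hη : η ≠ 0)
    (xi xj xk : Ω → ℝ)
    (hxi : xi = fun ω => β * γ * ε₂ ω + γ * ε₁ ω + ei ω)
    (hxj : xj = fun ω => θ * ε₂ ω + ej ω)
    (hxk : xk = fun ω => η * ε₂ ω + ek ω) :
    cov μ xi xk = β * γ * η * Var μ ε₂ ∧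
      cov μ xj xk = θ * η * Var μ ε₂ ∧
      (0 < Var μ ε₂ → cov μ xi xk / cov μ xj xk = β * γ / θ) := by
  have hL : ∀ n, MemLp (![ε₁, ε₂, ei, ej, ek] n) 2 μ := by
    intro n; fin_cases n <;> assumption
  have uncorr : ∀ m n, m ≠ n → cov[![ε₁, ε₂, ei, ej, ek] m, ![ε₁, ε₂, ei, ej, ek] n; μ] = 0 :=
    fun m n hmn ↦ (hindep.indepFun hmn).covariance_eq_zero (hL m) (hL n)
  have h₁₂ : cov[ε₁, ε₂; μ] = 0 := uncorr 0 1 (by decide)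
  have h₁k : cov[ε₁, ek; μ] = 0 := uncorr 0 4 (by decide)
  have hi₂ : cov[ei, ε₂; μ] = 0 := uncorr 2 1 (by decide)
  have hj₂ : cov[ej, ε₂; μ] = 0 := uncorr 3 1 (by decide)
  have h₂k : cov[ε₂, ek; μ] = 0 := uncorr 1 4 (by decide)
  have hik : cov[ei, ek; μ] = 0 := uncorr 2 4 (by decide)
  have hjk : cov[ej, ek; μ] = 0 := uncorr 3 4 (by decide)
  have hik_cov : cov μ xi xk = β * γ * η * Var μ ε₂ := by
    have hxi' : xi = fun ω ↦ β * γ * ε₂ ω + (γ * ε₁ ω + ei ω) := by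
      rw [hxi]; funext ω; ring
    have hNi : MemLp (fun ω ↦ γ * ε₁ ω + ei ω) 2 μ := (hL₁.const_mul γ).add hLi
    rw [hxi', hxk]
    refine covariance_one_factor hL₂ hNi hLk ?_ h₂k ?_ _ _
    · rw [covariance_const_mul_add_left hL₁ hLi hL₂, h₁₂, hi₂]; ring
    · rw [covariance_const_mul_add_left hL₁ hLi hLk, h₁k, hik]; ring
  have hjk_cov : cov μ xj xk = θ * η * Var μ ε₂ := by
    rw [hxj, hxk]
    exact covariance_one_factor hL₂ hLj hLk hj₂ h₂k hjk _ _
  refine ⟨hik_cov, hjk_cov, fun hpos ↦ ?_⟩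
  rw [hik_cov, hjk_cov, mul_assoc (β * γ), mul_assoc θ]
  exact mul_div_mul_right _ _ (mul_ne_zero hη hpos.ne')

/-- In the case-(ii) model, `cov(x_i, x_k) = βγη·Var(ε₂)` and `cov(x_j, x_k) = θη·Var(ε₂)`;
in particular, if `Var(ε₂) > 0` then `cov(x_i,x_k)/cov(x_j,x_k) = βγ/θ`. -/
theorem caseII_cov {Ω : Type*} [MeasurableSpace Ω] (μ : Measure Ω) [IsProbabilityMeasure μ]
    (ε₁ ε₂ ei ej ek : Ω → ℝ)
    (hm₁ : Measurable ε₁) (hm₂ : Measurable ε₂)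
    (hmi : Measurable ei) (hmj : Measurable ej) (hmk : Measurable ek)
    (hL₁ : MemLp ε₁ 2 μ) (hL₂ : MemLp ε₂ 2 μ)
    (hLi : MemLp ei 2 μ) (hLj : MemLp ej 2 μ) (hLk : MemLp ek 2 μ)
    (hz₁ : μ[ε₁] = 0) (hz₂ : μ[ε₂] = 0)
    (hzi : μ[ei] = 0) (hzj : μ[ej] = 0) (hzk : μ[ek] = 0)
    (hindep : iIndepFun ![ε₁, ε₂, ei, ej, ek] μ)
    (β γ θ η : ℝ) (hβ : β ≠ 0) (hγ : γ ≠ 0) (hθ : θ ≠ 0) (hη : η ≠ 0)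
    (xi xj xk : Ω → ℝ)
    (hxi : xi = fun ω => β * γ * ε₂ ω + γ * ε₁ ω + ei ω)
    (hxj : xj = fun ω => θ * ε₂ ω + ej ω)
    (hxk : xk = fun ω => η * ε₂ ω + ek ω) :
    cov μ xi xk = β * γ * η * Var μ ε₂ ∧
      cov μ xj xk = θ * η * Var μ ε₂ ∧
      (0 < Var μ ε₂ → cov μ xi xk / cov μ xj xk = β * γ / θ) :=
  caseII_cov_general μ ε₁ ε₂ ei ej ek hL₁ hL₂ hLi hLj hLk hindep β γ θ η hη xi xj xk hxi hxj hxk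
end

section
/- (Corollary 1, backward direction.) In the case-(ii) model with Var(ε₂) > 0, the pseudo-residual E_{(i,j|k)} and x_k are independent random variables; that is, {x_i, x_j} and {x_k} satisfy the Triad constraint. -/
/-!
Write `x_i = βγ·ε₂ + U_i`, `x_j = θ·ε₂ + U_j` with `U_i = γε₁ + e_i` and `U_j = e_j`, both
independent of `x_k = ηε₂ + e_k`. By bilinearity the covariances with `x_k` are
`βγ·cov(ε₂, x_k)` and `θ·cov(ε₂, x_k)`, where `cov(ε₂, x_k) = η·Var(ε₂) ≠ 0`; so their ratio is
the ratio `βγ/θ` of the loadings on the common factor `ε₂`, and the pseudo-residual is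
`U_i - (βγ/θ)·U_j = γε₁ + e_i - (βγ/θ)·e_j`. It is a function of `(ε₁, e_i, e_j)`, while `x_k`
is a function of `(ε₂, e_k)`.
-/

open MeasureTheory ProbabilityTheory
open scoped NNReal

namespace ProbabilityTheory

variable {Ω : Type*} [MeasurableSpace Ω] {μ : Measure Ω}

lemma iIndepFun.indepFun_prodMk₃_prodMk₀ {ι β : Type*} [MeasurableSpace β] {f : ι → Ω → β}
    (h : iIndepFun f μ) (hf : ∀ i, AEMeasurable (f i) μ) (i j k l m : ι)
    (hil : i ≠ l) (him : i ≠ m) (hjl : j ≠ l) (hjm : j ≠ m) (hkl : k ≠ l) (hkm : k ≠ m) :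
    IndepFun (fun ω ↦ (f i ω, f j ω, f k ω)) (fun ω ↦ (f l ω, f m ω)) μ := by
  classical
  have hST : Disjoint ({i, j, k} : Finset ι) {l, m} := by
    simp [Finset.disjoint_left, *]
  exact (h.indepFun_finset₀ _ _ hST hf).comp
    (φ := fun v : ({i, j, k} : Finset ι) → β ↦ (v ⟨i, by simp⟩, v ⟨j, by simp⟩, v ⟨k, by simp⟩))
    (ψ := fun v : ({l, m} : Finset ι) → β ↦ (v ⟨l, by simp⟩, v ⟨m, by simp⟩))
    (by fun_prop) (by fun_prop)

variable [IsFiniteMeasure μ]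

lemma covariance_const_mul_add_left_of_indepFun {Z U Y : Ω → ℝ} (hZ : MemLp Z 2 μ)
    (hU : MemLp U 2 μ) (hY : MemLp Y 2 μ) (hUY : IndepFun U Y μ) (a : ℝ) :
    covariance (fun ω ↦ a * Z ω + U ω) Y μ = a * covariance Z Y μ := by
  rw [show (fun ω ↦ a * Z ω + U ω) = (fun ω ↦ a * Z ω) + U from rfl,
    covariance_add_left (hZ.const_mul a) hU hY, covariance_const_mul_left,
    hUY.covariance_eq_zero hU hY, add_zero]

lemma covariance_div_covariance_of_indepFun {Z U₁ U₂ Y : Ω → ℝ} (hZ : MemLp Z 2 μ)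
    (hU₁ : MemLp U₁ 2 μ) (hU₂ : MemLp U₂ 2 μ) (hY : MemLp Y 2 μ)
    (hU₁Y : IndepFun U₁ Y μ) (hU₂Y : IndepFun U₂ Y μ) (hZY : covariance Z Y μ ≠ 0) (a b : ℝ) :
    covariance (fun ω ↦ a * Z ω + U₁ ω) Y μ / covariance (fun ω ↦ b * Z ω + U₂ ω) Y μ = a / b := by
  rw [covariance_const_mul_add_left_of_indepFun hZ hU₁ hY hU₁Y,
    covariance_const_mul_add_left_of_indepFun hZ hU₂ hY hU₂Y, mul_div_mul_right _ _ hZY]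

end ProbabilityTheory

theorem caseII_triad_satisfied_general {Ω : Type*} [MeasurableSpace Ω] (μ : Measure Ω)
    [IsProbabilityMeasure μ]
    (ε₁ ε₂ ei ej ek : Ω → ℝ)
    (hL₁ : MemLp ε₁ 2 μ) (hL₂ : MemLp ε₂ 2 μ)
    (hLi : MemLp ei 2 μ) (hLj : MemLp ej 2 μ) (hLk : MemLp ek 2 μ)
    (hindep : iIndepFun ![ε₁, ε₂, ei, ej, ek] μ)
    (β γ θ η : ℝ) (hθ : θ ≠ 0) (hη : η ≠ 0)
    (xi xj xk : Ω → ℝ)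
    (hxi : xi = fun ω => β * γ * ε₂ ω + γ * ε₁ ω + ei ω)
    (hxj : xj = fun ω => θ * ε₂ ω + ej ω)
    (hxk : xk = fun ω => η * ε₂ ω + ek ω)
    (hV₂ : 0 < Var μ ε₂) :
    IndepFun (fun ω => xi ω - (cov μ xi xk / cov μ xj xk) * xj ω) xk μ := by
  have hf : ∀ i, AEMeasurable (![ε₁, ε₂, ei, ej, ek] i) μ := by
    intro i
    fin_cases i
    exacts [hL₁.aemeasurable, hL₂.aemeasurable, hLi.aemeasurable, hLj.aemeasurable,
      hLk.aemeasurable]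
  have hblocks : IndepFun (fun ω ↦ (ε₁ ω, ei ω, ej ω)) (fun ω ↦ (ε₂ ω, ek ω)) μ :=
    hindep.indepFun_prodMk₃_prodMk₀ hf 0 2 3 1 4 (by decide) (by decide) (by decide) (by decide)
      (by decide) (by decide)
  obtain rfl : xi = fun ω ↦ β * γ * ε₂ ω + (γ * ε₁ ω + ei ω) := by
    rw [hxi]; ext ω; ring
  subst hxj hxk
  have hLxk : MemLp (fun ω ↦ η * ε₂ ω + ek ω) 2 μ := (hL₂.const_mul η).add hLk
  have hUi : IndepFun (fun ω ↦ γ * ε₁ ω + ei ω) (fun ω ↦ η * ε₂ ω + ek ω) μ :=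
    hblocks.comp (φ := fun p : ℝ × ℝ × ℝ ↦ γ * p.1 + p.2.1) (ψ := fun q : ℝ × ℝ ↦ η * q.1 + q.2)
      (by fun_prop) (by fun_prop)
  have hUj : IndepFun ej (fun ω ↦ η * ε₂ ω + ek ω) μ :=
    hblocks.comp (φ := fun p : ℝ × ℝ × ℝ ↦ p.2.2) (ψ := fun q : ℝ × ℝ ↦ η * q.1 + q.2)
      (by fun_prop) (by fun_prop)
  have hε₂xk : covariance ε₂ (fun ω ↦ η * ε₂ ω + ek ω) μ = η * Var μ ε₂ := by
    rw [covariance_comm,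
      covariance_const_mul_add_left_of_indepFun hL₂ hLk hL₂
        (hindep.indepFun (by decide : (4 : Fin 5) ≠ 1)) η]
    rfl
  have hratio : cov μ (fun ω ↦ β * γ * ε₂ ω + (γ * ε₁ ω + ei ω)) (fun ω ↦ η * ε₂ ω + ek ω)
      / cov μ (fun ω ↦ θ * ε₂ ω + ej ω) (fun ω ↦ η * ε₂ ω + ek ω) = β * γ / θ :=
    covariance_div_covariance_of_indepFun hL₂ ((hL₁.const_mul γ).add hLi) hLj hLxk hUi hUj
      (by rw [hε₂xk]; exact mul_ne_zero hη hV₂.ne') (β * γ) θ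
  have hres : (fun ω ↦ β * γ * ε₂ ω + (γ * ε₁ ω + ei ω) - β * γ / θ * (θ * ε₂ ω + ej ω))
      = fun ω ↦ γ * ε₁ ω + ei ω - β * γ / θ * ej ω := by
    ext ω; field_simp; ring
  rw [hratio, hres]
  exact hblocks.comp (φ := fun p : ℝ × ℝ × ℝ ↦ γ * p.1 + p.2.1 - β * γ / θ * p.2.2)
    (ψ := fun q : ℝ × ℝ ↦ η * q.1 + q.2) (by fun_prop) (by fun_prop)

/-- Corollary 1, backward direction: in the case-(ii) model with `Var(ε₂) > 0`, the
pseudo-residual `E_{(i,j|k)}` and `x_k` are independent, i.e. `{x_i, x_j}` and `{x_k}`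
satisfy the Triad constraint. -/
theorem caseII_triad_satisfied {Ω : Type*} [MeasurableSpace Ω] (μ : Measure Ω)
    [IsProbabilityMeasure μ]
    (ε₁ ε₂ ei ej ek : Ω → ℝ)
    (hm₁ : Measurable ε₁) (hm₂ : Measurable ε₂)
    (hmi : Measurable ei) (hmj : Measurable ej) (hmk : Measurable ek)
    (hL₁ : MemLp ε₁ 2 μ) (hL₂ : MemLp ε₂ 2 μ)
    (hLi : MemLp ei 2 μ) (hLj : MemLp ej 2 μ) (hLk : MemLp ek 2 μ)
    (hz₁ : μ[ε₁] = 0) (hz₂ : μ[ε₂] = 0)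
    (hzi : μ[ei] = 0) (hzj : μ[ej] = 0) (hzk : μ[ek] = 0)
    (hindep : iIndepFun ![ε₁, ε₂, ei, ej, ek] μ)
    (β γ θ η : ℝ) (hβ : β ≠ 0) (hγ : γ ≠ 0) (hθ : θ ≠ 0) (hη : η ≠ 0)
    (xi xj xk : Ω → ℝ)
    (hxi : xi = fun ω => β * γ * ε₂ ω + γ * ε₁ ω + ei ω)
    (hxj : xj = fun ω => θ * ε₂ ω + ej ω)
    (hxk : xk = fun ω => η * ε₂ ω + ek ω)
    (hV₂ : 0 < Var μ ε₂) :
    IndepFun (fun ω => xi ω - (cov μ xi xk / cov μ xj xk) * xj ω) xk μ :=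
  caseII_triad_satisfied_general μ ε₁ ε₂ ei ej ek hL₁ hL₂ hLi hLj hLk hindep β γ θ η hθ hη xi xj xk
    hxi hxj hxk hV₂
end

section
/- Let (ε̄_j)_{j ∈ Fin q} be jointly independent real random variables on a probability space, and let H be a real q × q̃ matrix such that every row of H has exactly one nonzero entry and every column of H has at least one nonzero entry (assumption A4). Define ε̃_i = (Σ_j (H j i)²)⁻¹ · Σ_j (H j i)·ε̄_j for each i ∈ Fin q̃ (these are the components of (HᵀH)⁻¹ Hᵀ ε̄). Then the family (ε̃_i)_{i ∈ Fin q̃} is jointly independent. -/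
/-!
Let `σ j` be the unique column in which row `j` of `H` is nonzero. Then `ε̃ i` only involves the
`ε̄ j` with `σ j = i`, so it is a measurable function of the block `(ε̄ j)_{σ j = i}`. Blocks over
disjoint index sets of an independent family are independent: the joint law of the family is a
product measure, and currying that product along the fibres of `σ` gives the product of the block
laws.
-/

open MeasureTheory ProbabilityTheory

namespace ProbabilityTheory

variable {Ω ι : Type*} {mΩ : MeasurableSpace Ω} {P : Measure Ω}

lemma iIndepFun.curry {κ : ι → Type*} {𝓧 : (i : ι) → κ i → Type*}
    {m𝓧 : ∀ i j, MeasurableSpace (𝓧 i j)} {X : (i : ι) → (j : κ i) → Ω → 𝓧 i j}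
    (mX : ∀ i j, Measurable (X i j))
    (h : iIndepFun (fun (p : (i : ι) × κ i) ω ↦ X p.1 p.2 ω) P) :
    iIndepFun (fun i ω ↦ (X i · ω)) P := by
  have := h.isProbabilityMeasure
  have : ∀ i j, IsProbabilityMeasure (P.map (X i j)) :=
    fun i j ↦ Measure.isProbabilityMeasure_map (mX i j).aemeasurable
  have hblock (i : ι) : iIndepFun (X i) P :=
    h.precomp (f := fun p ↦ X p.1 p.2) sigma_mk_injective
  have hcurry : MeasurableEquiv.piCurry 𝓧 ∘ (fun ω p ↦ X p.1 p.2 ω) = fun ω i j ↦ X i j ω := rfl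
  rw [iIndepFun_iff_map_fun_eq_infinitePi_map (by fun_prop), ← hcurry,
    ← Measure.map_map (by fun_prop) (by fun_prop),
    (iIndepFun_iff_map_fun_eq_infinitePi_map (by fun_prop)).1 h,
    Measure.infinitePi_map_piCurry (fun i j ↦ P.map (X i j))]
  congrm Measure.infinitePi fun i ↦ ?_
  rw [(iIndepFun_iff_map_fun_eq_infinitePi_map (mX i)).1 (hblock i)]

lemma iIndepFun.fiberwise {ι' : Type*} {β : ι → Type*} {mβ : ∀ i, MeasurableSpace (β i)}
    {f : (i : ι) → Ω → β i} (mf : ∀ i, Measurable (f i)) (h : iIndepFun f P) (σ : ι → ι') :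
    iIndepFun (fun k ω (j : {j // σ j = k}) ↦ f j ω) P :=
  iIndepFun.curry (X := fun k (j : {j // σ j = k}) ↦ f j) (fun _ j ↦ mf j)
    (h.precomp (Equiv.sigmaFiberEquiv σ).injective)

end ProbabilityTheory

theorem iIndepFun_tilde_eps_general {Ω : Type*} [MeasurableSpace Ω] (μ : Measure Ω)
    {q qt : ℕ}
    (epsbar : Fin q → Ω → ℝ) (hmeas : ∀ j, Measurable (epsbar j))
    (hindep : iIndepFun epsbar μ)
    (H : Matrix (Fin q) (Fin qt) ℝ)
    (hrow : ∀ j : Fin q, ∃! i : Fin qt, H j i ≠ 0) :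
    iIndepFun
      (fun (i : Fin qt) (ω : Ω) => (∑ j, (H j i) ^ 2)⁻¹ * ∑ j, H j i * epsbar j ω) μ := by
  choose σ _ hσ using hrow
  have hsum_fiber (i : Fin qt) (x : Fin q → ℝ) :
      ∑ j, H j i * x j = ∑ j : {j // σ j = i}, H j i * x j := by
    classical
    calc ∑ j, H j i * x j = ∑ j with σ j = i, H j i * x j :=
          (Finset.sum_filter_of_ne fun j _ h ↦ (hσ j i (left_ne_zero_of_mul h)).symm).symm
      _ = ∑ j : {j // σ j = i}, H j i * x j := Finset.sum_subtype _ (by simp) _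
  convert (hindep.fiberwise hmeas σ).comp
    (fun i (x : {j // σ j = i} → ℝ) ↦ (∑ j, H j i ^ 2)⁻¹ * ∑ j, H j.1 i * x j)
    (fun i ↦ by fun_prop) using 3 with i ω
  exact congrArg (_ * ·) (hsum_fiber i (epsbar · ω))

/-- If `(ε̄_j)` are jointly independent and `H` satisfies assumption A4 (each row has
exactly one nonzero entry, each column at least one), then the components
`ε̃_i = (Σ_j (H j i)²)⁻¹ · Σ_j (H j i)·ε̄_j` of `(HᵀH)⁻¹ Hᵀ ε̄` are jointly independent. -/
theorem iIndepFun_tilde_eps {Ω : Type*} [MeasurableSpace Ω] (μ : Measure Ω)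
    [IsProbabilityMeasure μ] {q qt : ℕ}
    (epsbar : Fin q → Ω → ℝ) (hmeas : ∀ j, Measurable (epsbar j))
    (hindep : iIndepFun epsbar μ)
    (H : Matrix (Fin q) (Fin qt) ℝ)
    (hrow : ∀ j : Fin q, ∃! i : Fin qt, H j i ≠ 0)
    (hcol : ∀ i : Fin qt, ∃ j : Fin q, H j i ≠ 0) :
    iIndepFun
      (fun (i : Fin qt) (ω : Ω) => (∑ j, (H j i) ^ 2)⁻¹ * ∑ j, H j i * epsbar j ω) μ :=
  iIndepFun_tilde_eps_general μ epsbar hmeas hindep H hrow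
end

section
/- Let A be a real n × n matrix all of whose entries are nonnegative. Then trace(exp(A)) = n if and only if A is nilpotent. In particular, for any real q × q matrix B, the acyclicity constraint h(B) = trace(exp(B ∘ B)) − q equals 0 if and only if B ∘ B (the entrywise/Hadamard square of B) is nilpotent. -/
/-!
Expanding the exponential, `tr (exp A) = ∑ₖ tr (A ^ k) / k!`; the `k = 0` term is `n` and, for
`A ≥ 0`, all other terms are nonnegative, so `tr (exp A) = n` iff `tr (A ^ k) = 0` for all `k ≥ 1`,
i.e. iff no positive power of `A` has a positive diagonal entry. As `(A ^ k) i j > 0` exactly when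
the digraph of positive entries of `A` has a walk of length `k` from `i` to `j`, this says that
the digraph has no cycles. Then all its walks visit pairwise distinct vertices, hence have
length `< n`, and `A ^ n = 0`. Conversely, nilpotent matrices have nilpotent, hence zero, trace.
-/

open Matrix
open scoped Matrix Nat

namespace Quiver.Path

variable {V : Type*} [Quiver V]

theorem nodup_vertices_of_forall_length_eq_zero (hV : ∀ (v : V) (c : Path v v), c.length = 0)
    {a b : V} (p : Path a b) : p.vertices.Nodup := by
  induction p with
  | nil => exact List.nodup_singleton a
  | @cons b c p e ih =>
    have hc : c ∉ p.vertices := fun hc => by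
      obtain ⟨-, q, -⟩ := p.exists_eq_comp_of_mem_vertices hc
      simpa using hV c (q.cons e)
    exact ih.concat hc

theorem length_lt_card_of_forall_length_eq_zero [Fintype V]
    (hV : ∀ (v : V) (c : Path v v), c.length = 0) {a b : V} (p : Path a b) :
    p.length < Fintype.card V := by
  simpa using (nodup_vertices_of_forall_length_eq_zero hV p).length_le_card

end Quiver.Path

namespace Matrix

variable {ι R : Type*} [Fintype ι] [DecidableEq ι] [CommRing R] [LinearOrder R]
  [IsStrictOrderedRing R] {A : Matrix ι ι R}

theorem pow_card_eq_zero_of_forall_pow_apply_self_eq_zero (hA : ∀ i j, 0 ≤ A i j)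
    (h : ∀ k, 0 < k → ∀ i, (A ^ k) i i = 0) : A ^ Fintype.card ι = 0 := by
  let := toQuiver A
  have hacyclic : ∀ (v : ι) (c : Quiver.Path v v), c.length = 0 := fun v c => by
    by_contra hc
    have := (pow_apply_pos_iff_nonempty_path hA c.length v v).mpr ⟨c, rfl⟩
    exact this.ne' (h _ (Nat.pos_of_ne_zero hc) v)
  ext i j
  refine (pow_apply_nonneg hA _ i j).antisymm' (not_lt.mp fun hpos => ?_)
  obtain ⟨p, hp⟩ := (pow_apply_pos_iff_nonempty_path hA _ i j).mp hpos
  exact (Quiver.Path.length_lt_card_of_forall_length_eq_zero hacyclic p).ne hp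

theorem isNilpotent_iff_forall_trace_pow_eq_zero (hA : ∀ i j, 0 ≤ A i j) :
    IsNilpotent A ↔ ∀ k, 0 < k → trace (A ^ k) = 0 := by
  refine ⟨fun hnil k hk => (isNilpotent_trace_of_isNilpotent (hnil.pow_of_pos hk.ne')).eq_zero,
    fun h => ⟨_, pow_card_eq_zero_of_forall_pow_apply_self_eq_zero hA fun k hk i => ?_⟩⟩
  exact (Finset.sum_eq_zero_iff_of_nonneg fun j _ => pow_apply_nonneg hA k j j).mp (h k hk) i
    (Finset.mem_univ i)

section TraceExp

attribute [local instance] Matrix.linftyOpNormedRing Matrix.linftyOpNormedAlgebra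

theorem hasSum_trace_exp {𝕂 : Type*} [RCLike 𝕂] (A : Matrix ι ι 𝕂) :
    HasSum (fun k => (k !⁻¹ : 𝕂) * trace (A ^ k)) (trace (NormedSpace.exp A)) := by
  have h := (NormedSpace.exp_series_hasSum_exp' (𝕂 := 𝕂) A).map (traceAddMonoidHom ι 𝕂)
    continuous_id.matrix_trace
  simp only [Function.comp_def, traceAddMonoidHom_apply, trace_smul, smul_eq_mul] at h
  exact h

end TraceExp

theorem trace_exp_eq_card_iff_isNilpotent {A : Matrix ι ι ℝ} (hA : ∀ i j, 0 ≤ A i j) :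
    trace (NormedSpace.exp A) = Fintype.card ι ↔ IsNilpotent A := by
  have htail := (hasSum_nat_add_iff' 1).mpr (hasSum_trace_exp A)
  simp only [Finset.sum_range_one, Nat.factorial_zero, Nat.cast_one, inv_one, pow_zero, trace_one,
    one_mul] at htail
  have hnonneg (k : ℕ) : 0 ≤ ((k + 1)! : ℝ)⁻¹ * trace (A ^ (k + 1)) :=
    mul_nonneg (by positivity) (Finset.sum_nonneg fun i _ => pow_apply_nonneg hA _ i i)
  rw [isNilpotent_iff_forall_trace_pow_eq_zero hA, ← sub_eq_zero]
  constructor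
  · intro h k hk
    rw [h, hasSum_zero_iff_of_nonneg hnonneg] at htail
    obtain ⟨k, rfl⟩ := Nat.exists_eq_add_of_lt hk
    simpa [Nat.factorial_ne_zero] using congr_fun htail k
  · intro h
    exact htail.unique (by simp [h])

end Matrix

/-- For a real square matrix `A` with nonnegative entries, `trace (exp A) = n` iff `A` is
nilpotent. In particular, for any real `q × q` matrix `B`, the acyclicity constraint
`h(B) = trace (exp (B ∘ B)) − q` vanishes iff the Hadamard square `B ∘ B` is nilpotent. -/
theorem trace_exp_eq_iff_isNilpotent {n : ℕ} (A : Matrix (Fin n) (Fin n) ℝ)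
    (hA : ∀ i j, 0 ≤ A i j) :
    ((NormedSpace.exp A).trace = n ↔ IsNilpotent A) ∧
      ∀ (q : ℕ) (B : Matrix (Fin q) (Fin q) ℝ),
        (NormedSpace.exp (B ⊙ B)).trace - q = 0 ↔ IsNilpotent (B ⊙ B) := by
  refine ⟨by simpa using trace_exp_eq_card_iff_isNilpotent hA, fun q B => ?_⟩
  rw [sub_eq_zero]
  simpa using trace_exp_eq_card_iff_isNilpotent (A := B ⊙ B) fun i j => mul_self_nonneg (B i j)
end

section
/- Let A be a real n × n matrix all of whose entries are nonnegative. Then A is nilpotent if and only if there exists a permutation σ of Fin n such that A i j = 0 whenever σ i ≤ σ j (i.e., A is permutation-similar to a strictly lower triangular matrix, equivalently the directed graph with an edge i → j whenever A i j ≠ 0 is acyclic). -/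
/-!
Label vertex `i` by its height, the least `k` for which row `i` of `A ^ k` vanishes; it exists
because `A` is nilpotent. Since `(A ^ (k + 1)) i l = ∑ j, A i j * (A ^ k) j l` is a sum of
nonnegative terms, an entry `A i j ≠ 0` forces the height of `j` to be smaller than that of `i`,
and sorting the vertices by height gives the permutation. Conversely, if every nonzero entry
`A i j` has `σ j < σ i`, then `(A ^ k) i j ≠ 0` needs `σ j + k ≤ σ i`, so `A ^ n = 0`.
-/

open Matrix

theorem Tuple.exists_perm_lt_of_lt {α : Type*} [LinearOrder α] {n : ℕ} (f : Fin n → α) :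
    ∃ σ : Equiv.Perm (Fin n), ∀ i j, f i < f j → σ i < σ j := by
  refine ⟨(Tuple.sort f).symm, fun i j hij => (Tuple.monotone_sort f).reflect_lt ?_⟩
  simpa only [Function.comp_apply, Equiv.apply_symm_apply] using hij

namespace Matrix

variable {ι R : Type*}

section Semiring

variable [Semiring R] [Fintype ι] [DecidableEq ι]

theorem pow_apply_eq_zero_of_lt_add {A : Matrix ι ι R} (f : ι → ℕ)
    (hA : ∀ i j, f i ≤ f j → A i j = 0) (k : ℕ) :
    ∀ i j, f i < f j + k → (A ^ k) i j = 0 := by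
  induction k with
  | zero =>
    intro i j hij
    exact one_apply_ne fun h => by subst h; omega
  | succ k ih =>
    intro i j hij
    rw [pow_succ', mul_apply]
    refine Finset.sum_eq_zero fun l _ => ?_
    by_cases hil : f i ≤ f l
    · rw [hA i l hil, zero_mul]
    · rw [ih l j (by omega), mul_zero]

theorem pow_eq_zero_of_apply_eq_zero_of_le {A : Matrix ι ι R} (f : ι → ℕ) {m : ℕ}
    (hf : ∀ i, f i < m) (hA : ∀ i j, f i ≤ f j → A i j = 0) : A ^ m = 0 := by
  ext i j
  exact pow_apply_eq_zero_of_lt_add f hA m i j (by have := hf i; omega)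

end Semiring

section OrderedSemiring

variable [Semiring R] [PartialOrder R] [IsOrderedRing R] [NoZeroDivisors R]

theorem apply_eq_zero_of_mul_apply_eq_zero {κ μ : Type*} [Fintype κ]
    {A : Matrix ι κ R} {B : Matrix κ μ R} (hA : ∀ i j, 0 ≤ A i j) (hB : ∀ i j, 0 ≤ B i j)
    {i : ι} {j : κ} {l : μ} (h : (A * B) i l = 0) (hij : A i j ≠ 0) : B j l = 0 := by
  rw [mul_apply, Finset.sum_eq_zero_iff_of_nonneg fun k _ => mul_nonneg (hA i k) (hB k l)] at h
  exact (mul_eq_zero.mp (h j (Finset.mem_univ j))).resolve_left hij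

variable [Fintype ι] [DecidableEq ι]

theorem exists_grading_of_isNilpotent {A : Matrix ι ι R} (hA : ∀ i j, 0 ≤ A i j)
    (hnil : IsNilpotent A) : ∃ h : ι → ℕ, ∀ i j, A i j ≠ 0 → h j < h i := by
  classical
  obtain ⟨m, hm⟩ := hnil
  have hrow : ∀ i, ∃ k, ∀ l, (A ^ k) i l = 0 := fun i => ⟨m, by simp [hm]⟩
  refine ⟨fun i => Nat.find (hrow i), fun i j hij => ?_⟩
  have : Nontrivial R := nontrivial_of_ne _ _ hij
  obtain ⟨k, hk⟩ : ∃ k, Nat.find (hrow i) = k + 1 := by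
    refine Nat.exists_eq_succ_of_ne_zero fun h0 => ?_
    simpa [h0] using Nat.find_spec (hrow i) i
  have hrow_i := Nat.find_spec (hrow i)
  rw [hk, pow_succ'] at hrow_i
  have hrow_j : ∀ l, (A ^ k) j l = 0 := fun l =>
    apply_eq_zero_of_mul_apply_eq_zero hA (pow_apply_nonneg hA k) (hrow_i l) hij
  simpa only [hk, Nat.lt_succ_iff] using Nat.find_le hrow_j

end OrderedSemiring

end Matrix

/-- A real square matrix with nonnegative entries is nilpotent iff it is
permutation-similar to a strictly lower triangular matrix (i.e., the associated directed
graph is acyclic, admitting a topological ordering). -/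
theorem isNilpotent_iff_strictly_lower_triangularizable {n : ℕ}
    (A : Matrix (Fin n) (Fin n) ℝ) (hA : ∀ i j, 0 ≤ A i j) :
    IsNilpotent A ↔ ∃ σ : Equiv.Perm (Fin n), ∀ i j, σ i ≤ σ j → A i j = 0 := by
  constructor
  · intro hnil
    obtain ⟨h, hh⟩ := exists_grading_of_isNilpotent hA hnil
    obtain ⟨σ, hσ⟩ := Tuple.exists_perm_lt_of_lt h
    exact ⟨σ, fun i j hle => by_contra fun hij => (hσ j i (hh i j hij)).not_ge hle⟩
  · rintro ⟨σ, hσ⟩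
    exact ⟨n, pow_eq_zero_of_apply_eq_zero_of_le (fun i => (σ i : ℕ)) (fun i => (σ i).isLt)
      fun i j hle => hσ i j (Fin.le_def.mpr hle)⟩
end
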